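/- arXiv:2405.04668 — 2 statements merged into one kernel-verified Lean document; each statement's English description precedes it below -/
import Mathlib

section
/- Let A be a real symmetric m×m matrix with spectral decomposition defining A⁺ = (A + |A|)/2 and A⁻ = (A - |A|)/2, where |A| has the absolute values of the eigenvalues of A. For vectors U, g ∈ ℝᵐ, the left-boundary term BTL = Uᵀ(A⁺g + A⁻U - (1/2)AU) satisfies BTL = (1/2)gᵀA⁺g - (1/2)|√(A⁺)(g-U)|² - (1/2)Uᵀ|A⁻|U, and in particular BTL ≤ (1/2)gᵀA⁺g. -/
open Matrix

open scoped ComplexOrder in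
/-- The positive semidefinite square root of a positive semidefinite matrix
(the definition `Matrix.PosSemidef.sqrt` of Mathlib, December 2024, since removed). -/
noncomputable def Matrix.PosSemidef.sqrt {n 𝕜 : Type*} [Fintype n] [DecidableEq n] [RCLike 𝕜]
    {A : Matrix n n 𝕜} (hA : A.PosSemidef) : Matrix n n 𝕜 :=
  hA.1.eigenvectorUnitary.1 * diagonal ((↑) ∘ (√·) ∘ hA.1.eigenvalues) *
  (star hA.1.eigenvectorUnitary : Matrix n n 𝕜)

/-!
Write `A = A⁺ + A⁻` and `|√(A⁺)(g-U)|² = (g-U)ᵀA⁺(g-U)` (the square root is Hermitian and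
squares to `A⁺`). The identity is then an expansion of quadratic forms in which the cross terms
`UᵀA⁺g` and `gᵀA⁺U` agree by symmetry of `A⁺`; the bound holds because both subtracted terms
are nonnegative.
-/

namespace Matrix.PosSemidef

open scoped ComplexOrder

variable {n 𝕜 : Type*} [Fintype n] [DecidableEq n] [RCLike 𝕜] {A : Matrix n n 𝕜}

lemma posSemidef_sqrt (hA : A.PosSemidef) : hA.sqrt.PosSemidef := by
  have hD : (diagonal ((RCLike.ofReal : ℝ → 𝕜) ∘ (√·) ∘ hA.1.eigenvalues)).PosSemidef :=
    posSemidef_diagonal_iff.mpr fun i => by simp [Real.sqrt_nonneg]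
  simpa [sqrt, Unitary.coe_star, star_eq_conjTranspose] using
    hD.mul_mul_conjTranspose_same (hA.1.eigenvectorUnitary : Matrix n n 𝕜)

lemma sqrt_mul_self (hA : A.PosSemidef) : hA.sqrt * hA.sqrt = A := by
  set V : Matrix n n 𝕜 := hA.1.eigenvectorUnitary.1
  set D := diagonal ((RCLike.ofReal : ℝ → 𝕜) ∘ (√·) ∘ hA.1.eigenvalues)
  have hV : (star hA.1.eigenvectorUnitary : Matrix n n 𝕜) * V = 1 :=
    Unitary.coe_star_mul_self _
  have hD : D * D = diagonal (RCLike.ofReal ∘ hA.1.eigenvalues) := by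
    rw [diagonal_mul_diagonal]
    congr 1 with i
    simp [← RCLike.ofReal_mul, Real.mul_self_sqrt (hA.eigenvalues_nonneg i)]
  calc hA.sqrt * hA.sqrt
      = V * (D * ((star hA.1.eigenvectorUnitary : Matrix n n 𝕜) * V) * D) *
          (star hA.1.eigenvectorUnitary : Matrix n n 𝕜) := by
        simp only [sqrt, Matrix.mul_assoc, V, D]
    _ = A := by
      rw [hV, Matrix.mul_one, hD]
      conv_rhs => rw [hA.1.spectral_theorem]
      simp [V, Unitary.conjStarAlgAut_apply]

lemma star_sqrt_mulVec_dotProduct_sqrt_mulVec (hA : A.PosSemidef) (x : n → 𝕜) :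
    star (hA.sqrt *ᵥ x) ⬝ᵥ hA.sqrt *ᵥ x = star x ⬝ᵥ A *ᵥ x := by
  rw [star_mulVec, ← dotProduct_mulVec, hA.posSemidef_sqrt.isHermitian.eq, mulVec_mulVec,
    hA.sqrt_mul_self]

end Matrix.PosSemidef

lemma Matrix.IsSymm.dotProduct_mulVec_comm {n R : Type*} [Fintype n] [CommSemiring R]
    {S : Matrix n n R} (hS : S.IsSymm) (x y : n → R) :
    x ⬝ᵥ S *ᵥ y = y ⬝ᵥ S *ᵥ x := by
  rw [dotProduct_mulVec, ← mulVec_transpose, hS.eq, dotProduct_comm]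

lemma upwind_boundary_term_eq {n K : Type*} [Fintype n] [Field K] [NeZero (2 : K)]
    {P : Matrix n n K} (hP : P.IsSymm) (N : Matrix n n K) (U g : n → K) :
    U ⬝ᵥ (P *ᵥ g + N *ᵥ U - (1 / 2 : K) • ((P + N) *ᵥ U))
      = 1 / 2 * (g ⬝ᵥ P *ᵥ g) - 1 / 2 * ((g - U) ⬝ᵥ P *ᵥ (g - U))
        - 1 / 2 * (U ⬝ᵥ (-N) *ᵥ U) := by
  simp only [add_mulVec, neg_mulVec, mulVec_sub, dotProduct_add, dotProduct_sub, sub_dotProduct,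
    dotProduct_smul, dotProduct_neg, smul_eq_mul, hP.dotProduct_mulVec_comm g U]
  field_simp
  ring

theorem left_boundary_term_bound_general {m : ℕ} (A Aabs : Matrix (Fin m) (Fin m) ℝ)
    (hAplus : (((1 : ℝ) / 2) • (A + Aabs)).PosSemidef)
    (hAminusAbs : (((1 : ℝ) / 2) • (Aabs - A)).PosSemidef)
    (U g : Fin m → ℝ) :
    U ⬝ᵥ ((((1 : ℝ) / 2) • (A + Aabs)).mulVec g
          + (((1 : ℝ) / 2) • (A - Aabs)).mulVec U
          - ((1 : ℝ) / 2) • A.mulVec U)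
      = (1 / 2) * (g ⬝ᵥ (((1 : ℝ) / 2) • (A + Aabs)).mulVec g)
        - (1 / 2) * ((hAplus.sqrt.mulVec (g - U)) ⬝ᵥ (hAplus.sqrt.mulVec (g - U)))
        - (1 / 2) * (U ⬝ᵥ (((1 : ℝ) / 2) • (Aabs - A)).mulVec U) ∧
    U ⬝ᵥ ((((1 : ℝ) / 2) • (A + Aabs)).mulVec g
          + (((1 : ℝ) / 2) • (A - Aabs)).mulVec U
          - ((1 : ℝ) / 2) • A.mulVec U)
      ≤ (1 / 2) * (g ⬝ᵥ (((1 : ℝ) / 2) • (A + Aabs)).mulVec g) := by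
  have hsplit : (1 / 2 : ℝ) • (A + Aabs) + (1 / 2 : ℝ) • (A - Aabs) = A := by module
  have hneg : -((1 / 2 : ℝ) • (A - Aabs)) = (1 / 2 : ℝ) • (Aabs - A) := by module
  have hnorm := hAplus.star_sqrt_mulVec_dotProduct_sqrt_mulVec (g - U)
  have key := upwind_boundary_term_eq (isHermitian_iff_isSymm.mp hAplus.isHermitian)
    ((1 / 2 : ℝ) • (A - Aabs)) U g
  simp only [star_trivial] at hnorm
  rw [hsplit, hneg, ← hnorm] at key
  refine ⟨key, ?_⟩
  rw [key]
  have hsq := dotProduct_star_self_nonneg (hAplus.sqrt *ᵥ (g - U))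
  have hM := hAminusAbs.dotProduct_mulVec_nonneg U
  simp only [star_trivial] at hsq hM
  linarith

/-- Left boundary term for a symmetric system with upwind flux:
`BTL = Uᵀ(A⁺g + A⁻U - (1/2)AU) = (1/2)gᵀA⁺g - (1/2)|√(A⁺)(g-U)|² - (1/2)Uᵀ|A⁻|U`,
in particular `BTL ≤ (1/2)gᵀA⁺g`.  Here `A⁺ = (A+|A|)/2`, `A⁻ = (A-|A|)/2`, with
`|A|` the positive semidefinite absolute value of `A` (`|A|² = A²`). -/
theorem left_boundary_term_bound {m : ℕ} (A Aabs : Matrix (Fin m) (Fin m) ℝ)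
    (hA : A.IsSymm) (hAabsPSD : Aabs.PosSemidef) (hsq : Aabs * Aabs = A * A)
    (hAplus : (((1 : ℝ) / 2) • (A + Aabs)).PosSemidef)
    (hAminusAbs : (((1 : ℝ) / 2) • (Aabs - A)).PosSemidef)
    (U g : Fin m → ℝ) :
    U ⬝ᵥ ((((1 : ℝ) / 2) • (A + Aabs)).mulVec g
          + (((1 : ℝ) / 2) • (A - Aabs)).mulVec U
          - ((1 : ℝ) / 2) • A.mulVec U)
      = (1 / 2) * (g ⬝ᵥ (((1 : ℝ) / 2) • (A + Aabs)).mulVec g)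
        - (1 / 2) * ((hAplus.sqrt.mulVec (g - U)) ⬝ᵥ (hAplus.sqrt.mulVec (g - U)))
        - (1 / 2) * (U ⬝ᵥ (((1 : ℝ) / 2) • (Aabs - A)).mulVec U) ∧
    U ⬝ᵥ ((((1 : ℝ) / 2) • (A + Aabs)).mulVec g
          + (((1 : ℝ) / 2) • (A - Aabs)).mulVec U
          - ((1 : ℝ) / 2) • A.mulVec U)
      ≤ (1 / 2) * (g ⬝ᵥ (((1 : ℝ) / 2) • (A + Aabs)).mulVec g) :=
  left_boundary_term_bound_general A Aabs hAplus hAminusAbs U g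
end

section
/- Let A = Aᵀ be a real m×m matrix with A⁺ = (A+|A|)/2 and |A⁻| = (|A|-A)/2. Then for every x ∈ ℝᵐ, xᵀA⁺x ≤ ρ(A)|x|² and xᵀ|A⁻|x ≤ ρ(A)|x|², where ρ(A) is the spectral radius of A. -/
/-!
Diagonalise `A = U diag(λ) Uᵀ` with `U` orthogonal: then `|A x|² = ∑ λᵢ² yᵢ²` with `y = Uᵀ x`,
so `|A x| ≤ ρ(A) |x|`. Since `Aabs` is symmetric with `Aabs² = A²`, also `|Aabs x|² = |A x|²`.
By Cauchy–Schwarz both `|xᵀ A x|` and `|xᵀ Aabs x|` are at most `ρ(A) |x|²`, and the two parts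
`(Aabs ± A) / 2` are averages of these quadratic forms.
-/

open Matrix

namespace Matrix

variable {n : Type*} [Fintype n]

theorem mulVec_dotProduct_mulVec_self {R : Type*} [CommSemiring R] {m : Type*} [Fintype m]
    (B : Matrix m n R) (v : n → R) : B *ᵥ v ⬝ᵥ B *ᵥ v = v ⬝ᵥ (Bᵀ * B) *ᵥ v := by
  rw [dotProduct_mulVec, vecMul_mulVec, ← dotProduct_mulVec]

theorem abs_dotProduct_mulVec_le {R : Type*} [CommRing R] [LinearOrder R] [IsStrictOrderedRing R]
    {B : Matrix n n R} {v : n → R} {c : R} (hc : 0 ≤ c)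
    (hB : B *ᵥ v ⬝ᵥ B *ᵥ v ≤ c ^ 2 * (v ⬝ᵥ v)) : |v ⬝ᵥ B *ᵥ v| ≤ c * (v ⬝ᵥ v) := by
  have cauchy_schwarz : (v ⬝ᵥ B *ᵥ v) ^ 2 ≤ (v ⬝ᵥ v) * (B *ᵥ v ⬝ᵥ B *ᵥ v) := by
    simpa only [dotProduct, sq] using Finset.sum_mul_sq_le_sq_mul_sq Finset.univ v (B *ᵥ v)
  have hv : 0 ≤ v ⬝ᵥ v := Finset.sum_nonneg fun i _ => mul_self_nonneg (v i)
  refine abs_le_of_sq_le_sq ?_ (mul_nonneg hc hv)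
  calc (v ⬝ᵥ B *ᵥ v) ^ 2 ≤ (v ⬝ᵥ v) * (c ^ 2 * (v ⬝ᵥ v)) :=
        cauchy_schwarz.trans (mul_le_mul_of_nonneg_left hB hv)
    _ = (c * (v ⬝ᵥ v)) ^ 2 := by ring

variable [DecidableEq n]

theorem mulVec_dotProduct_mulVec_self_of_mem_unitaryGroup {R : Type*} [CommRing R] [StarRing R]
    [TrivialStar R] {U : Matrix n n R} (hU : U ∈ unitaryGroup n R) (v : n → R) :
    U *ᵥ v ⬝ᵥ U *ᵥ v = v ⬝ᵥ v := by
  rw [mulVec_dotProduct_mulVec_self, ← conjTranspose_eq_transpose_of_trivial,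
    ← star_eq_conjTranspose, mem_unitaryGroup_iff'.mp hU, one_mulVec]

namespace IsHermitian

variable {A : Matrix n n ℝ} (hA : A.IsHermitian)
include hA

theorem mulVec_dotProduct_mulVec_self_le (x : n → ℝ) :
    A *ᵥ x ⬝ᵥ A *ᵥ x ≤ (⨆ i, |hA.eigenvalues i|) ^ 2 * (x ⬝ᵥ x) := by
  set U := hA.eigenvectorUnitary
  set y := star (U : Matrix n n ℝ) *ᵥ x
  have hAx : A *ᵥ x = U *ᵥ (diagonal hA.eigenvalues *ᵥ y) := by
    conv_lhs => rw [show A = U * diagonal hA.eigenvalues * star (U : Matrix n n ℝ) by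
      simpa [Unitary.conjStarAlgAut_apply] using hA.spectral_theorem]
    simp only [y, mulVec_mulVec, Matrix.mul_assoc]
  have hxy : x ⬝ᵥ x = y ⬝ᵥ y :=
    (mulVec_dotProduct_mulVec_self_of_mem_unitaryGroup (star U).2 x).symm
  have h_eig (i : n) : hA.eigenvalues i ^ 2 ≤ (⨆ i, |hA.eigenvalues i|) ^ 2 := by
    simpa only [sq_abs] using pow_le_pow_left₀ (abs_nonneg (hA.eigenvalues i))
      (le_ciSup (Finite.bddAbove_range fun j => |hA.eigenvalues j|) i) 2
  rw [hAx, mulVec_dotProduct_mulVec_self_of_mem_unitaryGroup U.2, hxy, dotProduct,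
    dotProduct, Finset.mul_sum]
  refine Finset.sum_le_sum fun i _ => ?_
  simp only [mulVec_diagonal]
  nlinarith [h_eig i, mul_self_nonneg (y i)]

end IsHermitian

end Matrix

/-- For real symmetric `A` with `A⁺ = (A+|A|)/2` and `|A⁻| = (|A|-A)/2`, the
quadratic forms are bounded by the spectral radius:
`xᵀA⁺x ≤ ρ(A)|x|²` and `xᵀ|A⁻|x ≤ ρ(A)|x|²`. -/
theorem psd_parts_bounded_by_spectral_radius {m : ℕ}
    (A Aabs : Matrix (Fin m) (Fin m) ℝ)
    (hA : A.IsHermitian) (hAabsPSD : Aabs.PosSemidef) (hsq : Aabs * Aabs = A * A)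
    (x : Fin m → ℝ) :
    x ⬝ᵥ (((1 : ℝ) / 2) • (A + Aabs)).mulVec x
        ≤ (⨆ i, |hA.eigenvalues i|) * (x ⬝ᵥ x) ∧
    x ⬝ᵥ (((1 : ℝ) / 2) • (Aabs - A)).mulVec x
        ≤ (⨆ i, |hA.eigenvalues i|) * (x ⬝ᵥ x) := by
  have hρ : 0 ≤ ⨆ i, |hA.eigenvalues i| := Real.iSup_nonneg fun i => abs_nonneg _
  have hAx := abs_dotProduct_mulVec_le hρ (hA.mulVec_dotProduct_mulVec_self_le x)
  have hAabsx : |x ⬝ᵥ Aabs *ᵥ x| ≤ (⨆ i, |hA.eigenvalues i|) * (x ⬝ᵥ x) := by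
    have hAabs_symm : Aabsᵀ = Aabs := hAabsPSD.isHermitian.eq
    have hA_symm : Aᵀ = A := hA.eq
    have h_norm : Aabs *ᵥ x ⬝ᵥ Aabs *ᵥ x = A *ᵥ x ⬝ᵥ A *ᵥ x := by
      rw [mulVec_dotProduct_mulVec_self, mulVec_dotProduct_mulVec_self, hAabs_symm, hA_symm,
        hsq]
    exact abs_dotProduct_mulVec_le hρ (h_norm ▸ hA.mulVec_dotProduct_mulVec_self_le x)
  simp only [smul_mulVec, add_mulVec, sub_mulVec, dotProduct_smul, dotProduct_add,
    dotProduct_sub, smul_eq_mul]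
  constructor <;> linarith [abs_le.mp hAx, abs_le.mp hAabsx]
end
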